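/- Dissipation estimate for hypoelliptic Ornstein-Uhlenbeck semigroups: assume the Kalman rank condition Rank[Q^{1/2}, BQ^{1/2}, ..., B^{n-1}Q^{1/2}] = n. Then for every T > 0 there exists C_T > 1 such that for all 0 ≤ t ≤ T, all k ≥ 0, and all g₀ ∈ L²(ℝⁿ), ‖(1−π_k)(e^{tP̃}g₀)‖_{L²(ℝⁿ)} ≤ e^{−δ(t)k²} ‖g₀‖_{L²(ℝⁿ)}, where δ(t) = (1/C_T) min(t,t₀)^{2k₀+1}, k₀ is the smallest integer with Rank[Q^{1/2}, ..., B^{k₀}Q^{1/2}] = n, and t₀ is as in the Kalman integral lower bound. -/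

import Mathlib

open Matrix MeasureTheory

/-- The positive semidefinite square root of a positive semidefinite matrix
(removed from Mathlib; restored with its old definition). -/
noncomputable def Matrix.PosSemidef.sqrt {n : Type*} [Fintype n] [DecidableEq n]
    {A : Matrix n n ℝ} (hA : A.PosSemidef) : Matrix n n ℝ :=
  (hA.1.eigenvectorUnitary : Matrix n n ℝ) * diagonal ((↑) ∘ (√·) ∘ hA.1.eigenvalues) *
    (star hA.1.eigenvectorUnitary : Matrix n n ℝ)

/-- The Kalman matrix `[R, BR, ..., B^k R]`. -/
noncomputable def kalmanMatrix {n : ℕ} (R B : Matrix (Fin n) (Fin n) ℝ) (k : ℕ) :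
    Matrix (Fin n) (Fin (k + 1) × Fin n) ℝ :=
  fun i p => (B ^ (p.1 : ℕ) * R) i p.2

/-- The Fourier transform of `e^{tP̃}g₀` for `P̃ = (1/2)Tr(Q∇²) + ⟨Bx,∇⟩ + (1/2)Tr B`,
in terms of `G = ĝ₀`:
`ĝ(t,ξ) = e^{−(t/2)Tr B} ĝ₀(e^{−tBᵀ}ξ) exp(−(1/2)∫₀ᵗ |Q^{1/2}e^{(s−t)Bᵀ}ξ|² ds)`. -/
noncomputable def OUFourier {n : ℕ} {Q : Matrix (Fin n) (Fin n) ℝ}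
    (B : Matrix (Fin n) (Fin n) ℝ) (hQ : Q.PosSemidef)
    (G : (Fin n → ℝ) → ℂ) (t : ℝ) (ξ : Fin n → ℝ) : ℂ :=
  Complex.exp (-((t : ℂ) / 2) * ((Matrix.trace B : ℝ) : ℂ)) *
    G ((NormedSpace.exp (-(t • Bᵀ))).mulVec ξ) *
    Real.exp (-(1 / 2) *
      ∫ s in (0:ℝ)..t,
        (hQ.sqrt.mulVec ((NormedSpace.exp ((s - t) • Bᵀ)).mulVec ξ)) ⬝ᵥ
          (hQ.sqrt.mulVec ((NormedSpace.exp ((s - t) • Bᵀ)).mulVec ξ)))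

/-!
Writing `X = e^{-tBᵀ}ξ`, the Fourier multiplier of the semigroup has modulus
`e^{-(t/2) Tr B} e^{-(1/2)⟨X, Γ_t X⟩}`, where `Γ_t` is the controllability Gramian. The Kalman
lower bound `⟨X, Γ_s X⟩ ≥ c s^{2k₀+1}|X|²` for `s ≤ t₀`, monotonicity of `t ↦ Γ_t` and the
bound `|ξ| ≤ ‖e^{tBᵀ}‖ |X|`, uniform for `t ∈ [0, T]`, give `⟨X, Γ_t X⟩ ≳ min(t, t₀)^{2k₀+1} k²`
on `|ξ| ≥ k`. The change of variables `ξ ↦ X` has Jacobian `e^{t Tr B}`, because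
`det e^A = e^{Tr A}`, which exactly cancels the factor `e^{-t Tr B}`.
-/

section DetExp

open scoped Matrix.Norms.Operator

variable {n : Type*} [Fintype n] [DecidableEq n]

noncomputable def Matrix.detRowContinuousMultilinear :
    ContinuousMultilinearMap ℝ (fun _ : n => n → ℝ) ℝ :=
  ⟨(detRowAlternating : (n → ℝ) [⋀^n]→ₗ[ℝ] ℝ).toMultilinearMap, continuous_id.matrix_det⟩

theorem HasDerivAt.matrix_det {M : ℝ → Matrix n n ℝ} {M' : Matrix n n ℝ} {t : ℝ}
    (h : HasDerivAt M M' t) :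
    HasDerivAt (fun s => (M s).det) (∑ i, ((M t).updateRow i (M' i)).det) t := by
  let e : Matrix n n ℝ ≃L[ℝ] (n → n → ℝ) :=
    (Matrix.ofLinearEquiv ℝ).symm.toContinuousLinearEquiv
  have := ((detRowContinuousMultilinear.hasFDerivAt (e (M t))).comp (M t)
    e.hasFDerivAt).comp_hasDerivAt t h
  rw [ContinuousLinearMap.comp_apply, ContinuousMultilinearMap.linearDeriv_apply] at this
  exact this

theorem Matrix.sum_det_updateRow_mul_row (A M : Matrix n n ℝ) :
    ∑ i, (M.updateRow i ((A * M) i)).det = A.trace * M.det := by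
  have hrow (i : n) : (A * M) i = ∑ k, A i k • M k := by
    ext j; simp [Matrix.mul_apply, Finset.sum_apply]
  simp only [hrow, det_updateRow_sum, smul_eq_mul, trace, diag, Finset.sum_mul]

theorem eq_mul_exp_of_hasDerivAt_mul {g : ℝ → ℝ} {a : ℝ}
    (hg : ∀ t, HasDerivAt g (a * g t) t) (t : ℝ) : g t = g 0 * Real.exp (a * t) := by
  have hconst (s : ℝ) : HasDerivAt (fun u => g u * Real.exp (-a * u)) 0 s := by
    have he : HasDerivAt (fun u => Real.exp (-a * u)) (Real.exp (-a * s) * -a) s := by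
      simpa using ((hasDerivAt_id s).const_mul (-a)).exp
    exact ((hg s).mul he).congr_deriv (by ring)
  have := is_const_of_deriv_eq_zero (fun s => (hconst s).differentiableAt)
    (fun s => (hconst s).deriv) t 0
  simp only [mul_zero, Real.exp_zero, mul_one] at this
  rw [← this, mul_assoc, ← Real.exp_add, neg_mul, neg_add_cancel, Real.exp_zero, mul_one]

theorem Matrix.det_exp (A : Matrix n n ℝ) : (NormedSpace.exp A).det = Real.exp A.trace := by
  have hexp (t : ℝ) : HasDerivAt (fun u : ℝ => NormedSpace.exp (u • A))
      (A * NormedSpace.exp (t • A)) t :=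
    hasDerivAt_exp_smul_const' A t
  have hdet (t : ℝ) : HasDerivAt (fun u : ℝ => (NormedSpace.exp (u • A)).det)
      (A.trace * (NormedSpace.exp (t • A)).det) t := by
    simpa only [Matrix.sum_det_updateRow_mul_row] using (hexp t).matrix_det
  simpa using eq_mul_exp_of_hasDerivAt_mul hdet 1

end DetExp

section EuclideanBound

open scoped Matrix.Norms.L2Operator

variable {m n α : Type*} [Fintype m] [Fintype n] [TopologicalSpace α]

theorem EuclideanSpace.norm_toLp_sq (v : n → ℝ) :
    ‖(WithLp.toLp 2 v : EuclideanSpace ℝ n)‖ ^ 2 = v ⬝ᵥ v := by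
  rw [← real_inner_self_eq_norm_sq, EuclideanSpace.inner_eq_star_dotProduct]
  simp

variable [DecidableEq n]

theorem Matrix.dotProduct_mulVec_self_le (A : Matrix m n ℝ) (x : n → ℝ) :
    (A *ᵥ x) ⬝ᵥ (A *ᵥ x) ≤ ‖A‖ ^ 2 * (x ⬝ᵥ x) := by
  rw [← EuclideanSpace.norm_toLp_sq, ← EuclideanSpace.norm_toLp_sq, ← mul_pow]
  exact pow_le_pow_left₀ (norm_nonneg _) (A.l2_opNorm_mulVec (WithLp.toLp 2 x)) 2

theorem IsCompact.exists_dotProduct_mulVec_le {K : Set α} (hK : IsCompact K)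
    {A : α → Matrix m n ℝ} (hA : ContinuousOn A K) :
    ∃ M > 0, ∀ a ∈ K, ∀ x, (A a *ᵥ x) ⬝ᵥ (A a *ᵥ x) ≤ M * (x ⬝ᵥ x) := by
  obtain ⟨C, hC⟩ := hK.exists_bound_of_continuousOn hA
  refine ⟨C ^ 2 + 1, by positivity, fun a ha x => ?_⟩
  refine (A a).dotProduct_mulVec_self_le x |>.trans (mul_le_mul_of_nonneg_right ?_ ?_)
  · nlinarith [hC a ha, norm_nonneg (A a)]
  · exact dotProduct_star_self_nonneg x

end EuclideanBound

section ChangeOfVariables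

variable {ι : Type*} [Fintype ι] [DecidableEq ι] {E : Type*} [NormedAddCommGroup E]
  {A : Matrix ι ι ℝ}

noncomputable def Matrix.mulVecMeasurableEquiv (hA : A.det ≠ 0) : (ι → ℝ) ≃ᵐ (ι → ℝ) :=
  ((toLin' A).equivOfDetNeZero (by rwa [LinearMap.det_toLin'])).toContinuousLinearEquiv
    |>.toHomeomorph.toMeasurableEquiv

theorem Matrix.map_mulVecMeasurableEquiv_volume (hA : A.det ≠ 0) :
    Measure.map (A.mulVecMeasurableEquiv hA) volume = ENNReal.ofReal |A.det⁻¹| • volume := by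
  have hcoe : ⇑(A.mulVecMeasurableEquiv hA) = toLin' A := rfl
  rw [hcoe, ← LinearMap.det_toLin']
  exact Real.map_linearMap_volume_pi_eq_smul_volume_pi (by rwa [LinearMap.det_toLin'])

theorem MeasureTheory.Integrable.comp_mulVec (hA : A.det ≠ 0) {f : (ι → ℝ) → E}
    (hf : Integrable f) : Integrable (fun x => f (A *ᵥ x)) := by
  have := (integrable_map_equiv (A.mulVecMeasurableEquiv hA) (μ := volume) f).1
  rw [A.map_mulVecMeasurableEquiv_volume hA] at this
  exact this (hf.smul_measure ENNReal.ofReal_ne_top)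

theorem MeasureTheory.integral_comp_mulVec [NormedSpace ℝ E] (hA : A.det ≠ 0)
    (f : (ι → ℝ) → E) : ∫ x, f (A *ᵥ x) = |A.det|⁻¹ • ∫ x, f x := by
  have := integral_map_equiv (A.mulVecMeasurableEquiv hA) (μ := volume) f
  rw [A.map_mulVecMeasurableEquiv_volume hA, integral_smul_measure,
    ENNReal.toReal_ofReal (abs_nonneg _), abs_inv] at this
  exact this.symm

end ChangeOfVariables

section Gramian

variable {ι : Type*} [Fintype ι] [DecidableEq ι]

theorem Matrix.continuous_exp_smul (A : Matrix ι ι ℝ) :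
    Continuous fun t : ℝ => NormedSpace.exp (t • A) := by
  open scoped Matrix.Norms.Operator in
  exact NormedSpace.exp_continuous.comp (continuous_id.smul continuous_const)

theorem Matrix.exp_sub_smul (A : Matrix ι ι ℝ) (s t : ℝ) :
    NormedSpace.exp ((s - t) • A) = NormedSpace.exp (s • A) * NormedSpace.exp (-(t • A)) := by
  rw [sub_smul, sub_eq_add_neg]
  exact Matrix.exp_add_of_commute _ _ (((Commute.refl A).smul_left s).smul_right t).neg_right

theorem Matrix.det_exp_neg_smul_transpose (B : Matrix ι ι ℝ) (t : ℝ) :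
    (NormedSpace.exp (-(t • Bᵀ))).det = Real.exp (-(t * B.trace)) := by
  rw [Matrix.det_exp, trace_neg, trace_smul, trace_transpose, smul_eq_mul]

/-- The quadratic form `X ↦ ⟨X, Γ_t X⟩` of the controllability Gramian
`Γ_t = ∫₀ᵗ e^{sB} R Rᵀ e^{sBᵀ} ds`. -/
noncomputable def gramianForm (R B : Matrix ι ι ℝ) (t : ℝ) (X : ι → ℝ) : ℝ :=
  ∫ s in (0:ℝ)..t,
    (R *ᵥ (NormedSpace.exp (s • Bᵀ) *ᵥ X)) ⬝ᵥ (R *ᵥ (NormedSpace.exp (s • Bᵀ) *ᵥ X))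

theorem gramianForm_mono (R B : Matrix ι ι ℝ) (X : ι → ℝ) {a b : ℝ} (ha : 0 ≤ a)
    (hab : a ≤ b) : gramianForm R B a X ≤ gramianForm R B b X := by
  have hcont : Continuous fun s : ℝ => R *ᵥ (NormedSpace.exp (s • Bᵀ) *ᵥ X) :=
    continuous_const.matrix_mulVec (Bᵀ.continuous_exp_smul.matrix_mulVec continuous_const)
  exact intervalIntegral.integral_mono_interval le_rfl ha hab
    (Filter.Eventually.of_forall fun _ => dotProduct_star_self_nonneg _)
    ((hcont.dotProduct hcont).intervalIntegrable _ _)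

theorem integral_exp_sub_smul_eq_gramianForm (R B : Matrix ι ι ℝ) (t : ℝ) (ξ : ι → ℝ) :
    ∫ s in (0:ℝ)..t, (R *ᵥ (NormedSpace.exp ((s - t) • Bᵀ) *ᵥ ξ)) ⬝ᵥ
        (R *ᵥ (NormedSpace.exp ((s - t) • Bᵀ) *ᵥ ξ)) =
      gramianForm R B t (NormedSpace.exp (-(t • Bᵀ)) *ᵥ ξ) := by
  simp only [gramianForm, Matrix.exp_sub_smul, mulVec_mulVec]

theorem le_gramianForm_exp_neg_smul_mulVec {R B : Matrix ι ι ℝ} {c t₀ t M r : ℝ} {p : ℕ}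
    (hc : 0 ≤ c) (ht₀ : 0 ≤ t₀) (ht : 0 ≤ t)
    (hlow : ∀ s, 0 ≤ s → s ≤ t₀ → ∀ X, c * s ^ p * (X ⬝ᵥ X) ≤ gramianForm R B s X)
    (hM : 0 < M)
    (hexp : ∀ X, (NormedSpace.exp (t • Bᵀ) *ᵥ X) ⬝ᵥ (NormedSpace.exp (t • Bᵀ) *ᵥ X) ≤
      M * (X ⬝ᵥ X))
    {ξ : ι → ℝ} (hξ : r ≤ ξ ⬝ᵥ ξ) :
    c * min t t₀ ^ p * r / M ≤ gramianForm R B t (NormedSpace.exp (-(t • Bᵀ)) *ᵥ ξ) := by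
  set X := NormedSpace.exp (-(t • Bᵀ)) *ᵥ ξ
  have hξX : NormedSpace.exp (t • Bᵀ) *ᵥ X = ξ := by
    have h := Bᵀ.exp_sub_smul t t
    rw [sub_self, zero_smul, NormedSpace.exp_zero] at h
    rw [mulVec_mulVec, ← h, one_mulVec]
  have hrX : r / M ≤ X ⬝ᵥ X := by
    rw [div_le_iff₀' hM]
    exact hξ.trans (hξX ▸ hexp X)
  have hm : 0 ≤ min t t₀ := le_min ht ht₀
  calc c * min t t₀ ^ p * r / M = c * min t t₀ ^ p * (r / M) := mul_div_assoc _ _ _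
    _ ≤ c * min t t₀ ^ p * (X ⬝ᵥ X) := by gcongr
    _ ≤ gramianForm R B (min t t₀) X := hlow _ hm (min_le_right _ _) X
    _ ≤ gramianForm R B t X := gramianForm_mono R B X hm (min_le_left _ _)

end Gramian

section Dissipation

variable {n : ℕ} {Q : Matrix (Fin n) (Fin n) ℝ} (B : Matrix (Fin n) (Fin n) ℝ)
  (hQ : Q.PosSemidef) (G : (Fin n → ℝ) → ℂ) (t : ℝ)

theorem norm_OUFourier_sq (ξ : Fin n → ℝ) :
    ‖OUFourier B hQ G t ξ‖ ^ 2 = Real.exp (-(t * B.trace)) *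
      Real.exp (-gramianForm hQ.sqrt B t (NormedSpace.exp (-(t • Bᵀ)) *ᵥ ξ)) *
      ‖G (NormedSpace.exp (-(t • Bᵀ)) *ᵥ ξ)‖ ^ 2 := by
  rw [OUFourier, integral_exp_sub_smul_eq_gramianForm]
  have hre : (-((t : ℂ) / 2) * (B.trace : ℂ)).re = -(t / 2) * B.trace := by
    simp
  rw [norm_mul, norm_mul, Complex.norm_real, Real.norm_of_nonneg (Real.exp_pos _).le,
    Complex.norm_exp, hre, mul_pow, mul_pow, ← Real.exp_nat_mul, ← Real.exp_nat_mul]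
  ring_nf

theorem integral_indicator_norm_OUFourier_sq_le {S : Set (Fin n → ℝ)} {a : ℝ}
    (hG : MemLp G 2 volume)
    (ha : ∀ ξ ∈ S, a ≤ gramianForm hQ.sqrt B t (NormedSpace.exp (-(t • Bᵀ)) *ᵥ ξ)) :
    ∫ ξ, S.indicator (fun ξ => ‖OUFourier B hQ G t ξ‖ ^ 2) ξ ≤
      Real.exp (-a) * ∫ ξ, ‖G ξ‖ ^ 2 := by
  set N := NormedSpace.exp (-(t • Bᵀ))
  have hN : N.det ≠ 0 := by rw [Matrix.det_exp_neg_smul_transpose]; positivity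
  have hGN : ∫ ξ, ‖G (N *ᵥ ξ)‖ ^ 2 = Real.exp (t * B.trace) * ∫ ξ, ‖G ξ‖ ^ 2 := by
    rw [integral_comp_mulVec hN (fun ξ => ‖G ξ‖ ^ 2), Matrix.det_exp_neg_smul_transpose,
      abs_of_pos (Real.exp_pos _), ← Real.exp_neg, neg_neg, smul_eq_mul]
  have hpoint (ξ : Fin n → ℝ) : S.indicator (fun ξ => ‖OUFourier B hQ G t ξ‖ ^ 2) ξ ≤
      Real.exp (-(t * B.trace)) * (Real.exp (-a) * ‖G (N *ᵥ ξ)‖ ^ 2) := by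
    by_cases hξ : ξ ∈ S
    · rw [Set.indicator_of_mem hξ, norm_OUFourier_sq, mul_assoc]
      gcongr
      exact ha ξ hξ
    · rw [Set.indicator_of_notMem hξ]
      positivity
  calc ∫ ξ, S.indicator (fun ξ => ‖OUFourier B hQ G t ξ‖ ^ 2) ξ
      ≤ ∫ ξ, Real.exp (-(t * B.trace)) * (Real.exp (-a) * ‖G (N *ᵥ ξ)‖ ^ 2) :=
        integral_mono_of_nonneg (Filter.Eventually.of_forall fun _ =>
            Set.indicator_nonneg (fun _ _ => by positivity) _)
          (((hG.integrable_norm_pow two_ne_zero).comp_mulVec hN).const_mul _ |>.const_mul _)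
          (Filter.Eventually.of_forall hpoint)
    _ = Real.exp (-a) * ∫ ξ, ‖G ξ‖ ^ 2 := by
      have hcancel : Real.exp (-(t * B.trace)) * Real.exp (t * B.trace) = 1 := by
        rw [← Real.exp_add, neg_add_cancel, Real.exp_zero]
      rw [integral_const_mul, integral_const_mul, hGN]
      linear_combination (Real.exp (-a) * ∫ ξ, ‖G ξ‖ ^ 2) * hcancel

end Dissipation

/-- Stated on the Fourier side: by Plancherel, `‖(1−π_k)e^{tP̃}g₀‖_{L²}` is proportional to the
square root of `∫_{|ξ|≥k}|ĝ(t,ξ)|²dξ` and `‖g₀‖_{L²}` to that of `∫|ĝ₀|²`. -/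
theorem stmt8_general {n : ℕ} (Q B : Matrix (Fin n) (Fin n) ℝ) (hQ : Q.PosSemidef) (k₀ : ℕ)
    (c t₀ : ℝ) (hc : 0 < c) (ht₀ : 0 < t₀)
    (hlow : ∀ t : ℝ, 0 ≤ t → t ≤ t₀ → ∀ X : Fin n → ℝ,
      c * t ^ (2 * k₀ + 1) * (X ⬝ᵥ X) ≤
        ∫ s in (0:ℝ)..t,
          (hQ.sqrt.mulVec ((NormedSpace.exp (s • Bᵀ)).mulVec X)) ⬝ᵥ
            (hQ.sqrt.mulVec ((NormedSpace.exp (s • Bᵀ)).mulVec X)))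
    (T : ℝ) :
    ∃ C : ℝ, 1 < C ∧ ∀ t : ℝ, 0 ≤ t → t ≤ T → ∀ k : ℕ,
      ∀ G : (Fin n → ℝ) → ℂ, MemLp G 2 volume →
        Real.sqrt (∫ ξ : Fin n → ℝ,
            Set.indicator {ξ : Fin n → ℝ | (k : ℝ) ≤ Real.sqrt (ξ ⬝ᵥ ξ)}
              (fun ξ => ‖OUFourier B hQ G t ξ‖ ^ 2) ξ) ≤
          Real.exp (-(min t t₀ ^ (2 * k₀ + 1) / C) * (k : ℝ) ^ 2) *
            Real.sqrt (∫ ξ : Fin n → ℝ, ‖G ξ‖ ^ 2) := by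
  obtain ⟨M, hM, hexp⟩ := (isCompact_Icc (a := 0) (b := T)).exists_dotProduct_mulVec_le
    Bᵀ.continuous_exp_smul.continuousOn
  have hC : 1 < 2 * M / c + 1 := by linarith [show 0 < 2 * M / c by positivity]
  refine ⟨2 * M / c + 1, hC, fun t ht htT k G hG => ?_⟩
  set δ := min t t₀ ^ (2 * k₀ + 1) / (2 * M / c + 1)
  have hδ : 2 * δ * k ^ 2 ≤ c * min t t₀ ^ (2 * k₀ + 1) * k ^ 2 / M := by
    have hCM : 2 / (2 * M / c + 1) ≤ c / M := by
      rw [div_le_div_iff₀ (by positivity) hM, mul_add, mul_div_cancel₀ _ hc.ne']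
      linarith
    calc 2 * δ * k ^ 2 = min t t₀ ^ (2 * k₀ + 1) * k ^ 2 * (2 / (2 * M / c + 1)) := by ring
      _ ≤ min t t₀ ^ (2 * k₀ + 1) * k ^ 2 * (c / M) := by gcongr
      _ = c * min t t₀ ^ (2 * k₀ + 1) * k ^ 2 / M := by ring
  have hgram : ∀ ξ ∈ {ξ : Fin n → ℝ | (k : ℝ) ≤ Real.sqrt (ξ ⬝ᵥ ξ)},
      2 * δ * k ^ 2 ≤ gramianForm hQ.sqrt B t (NormedSpace.exp (-(t • Bᵀ)) *ᵥ ξ) := by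
    intro ξ hξ
    refine hδ.trans (le_gramianForm_exp_neg_smul_mulVec hc.le ht₀.le ht hlow hM
      (hexp t ⟨ht, htT⟩) ?_)
    exact (Real.le_sqrt (Nat.cast_nonneg k) (dotProduct_star_self_nonneg ξ)).1 hξ
  calc _ ≤ Real.sqrt (Real.exp (-(2 * δ * k ^ 2)) * ∫ ξ, ‖G ξ‖ ^ 2) :=
        Real.sqrt_le_sqrt (integral_indicator_norm_OUFourier_sq_le B hQ G t hG hgram)
    _ = Real.exp (-δ * k ^ 2) * Real.sqrt (∫ ξ, ‖G ξ‖ ^ 2) := by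
      rw [Real.sqrt_mul (Real.exp_pos _).le, ← Real.exp_half]
      ring_nf

/-- dissipation estimate for hypoelliptic Ornstein-Uhlenbeck semigroups, stated
on the Fourier side (by Plancherel, `‖(1−π_k)e^{tP̃}g₀‖_{L²}` is proportional to the square
root of `∫_{|ξ|≥k}|ĝ(t,ξ)|²dξ` and `‖g₀‖_{L²}` to that of `∫|ĝ₀|²`): under the Kalman rank
condition, for every `T > 0` there is `C_T > 1` such that for `0 ≤ t ≤ T`, `k ∈ ℕ` and
`g₀ ∈ L²`, `‖(1−π_k)(e^{tP̃}g₀)‖ ≤ e^{−δ(t)k²}‖g₀‖` with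
`δ(t) = (1/C_T) min(t,t₀)^{2k₀+1}`, `k₀` the smallest integer with
`Rank[Q^{1/2},...,B^{k₀}Q^{1/2}] = n`, and `t₀` as in the Kalman integral lower bound. -/
theorem stmt8 {n : ℕ} (Q B : Matrix (Fin n) (Fin n) ℝ) (hQ : Q.PosSemidef)
    (hKal : (kalmanMatrix hQ.sqrt B (n - 1)).rank = n)
    (k₀ : ℕ) (hk₀ : IsLeast {k : ℕ | (kalmanMatrix hQ.sqrt B k).rank = n} k₀)
    (c t₀ : ℝ) (hc : 0 < c) (ht₀ : 0 < t₀) (ht₀1 : t₀ ≤ 1)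
    (hlow : ∀ t : ℝ, 0 ≤ t → t ≤ t₀ → ∀ X : Fin n → ℝ,
      c * t ^ (2 * k₀ + 1) * (X ⬝ᵥ X) ≤
        ∫ s in (0:ℝ)..t,
          (hQ.sqrt.mulVec ((NormedSpace.exp (s • Bᵀ)).mulVec X)) ⬝ᵥ
            (hQ.sqrt.mulVec ((NormedSpace.exp (s • Bᵀ)).mulVec X)))
    (T : ℝ) (hT : 0 < T) :
    ∃ C : ℝ, 1 < C ∧ ∀ t : ℝ, 0 ≤ t → t ≤ T → ∀ k : ℕ,
      ∀ G : (Fin n → ℝ) → ℂ, MemLp G 2 volume →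
        Real.sqrt (∫ ξ : Fin n → ℝ,
            Set.indicator {ξ : Fin n → ℝ | (k : ℝ) ≤ Real.sqrt (ξ ⬝ᵥ ξ)}
              (fun ξ => ‖OUFourier B hQ G t ξ‖ ^ 2) ξ) ≤
          Real.exp (-(min t t₀ ^ (2 * k₀ + 1) / C) * (k : ℝ) ^ 2) *
            Real.sqrt (∫ ξ : Fin n → ℝ, ‖G ξ‖ ^ 2) :=
  stmt8_general Q B hQ k₀ c t₀ hc ht₀ hlow T
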